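/- Let $g_1, g_2$ be independent exponential random variables with means $\varepsilon_1, \varepsilon_2 > 0$. For positive constants $P_s, P_d, \sigma^2, \gamma_o$, $\Pr\left(\frac{P_s^2 g_1 g_2}{\sigma^2[P_s g_1 + (P_s + P_d) g_2 + \sigma^2]} < \gamma_o\right) = 1 - e^{-\frac{\gamma_o \sigma^2}{P_s}\left(\frac{P_s + P_d}{P_s \varepsilon_1} + \frac{1}{\varepsilon_2}\right)} \cdot \frac{2\gamma_o\sigma^2}{P_s}\sqrt{\frac{1}{\varepsilon_1\varepsilon_2}\left(\frac{P_s+P_d}{P_s} + \frac{1}{\gamma_o}\right)} \, K_1\left(\frac{2\gamma_o\sigma^2}{P_s}\sqrt{\frac{1}{\varepsilon_1\varepsilon_2}\left(\frac{P_s+P_d}{P_s} + \frac{1}{\gamma_o}\right)}\right)$. -/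

import Mathlib

open MeasureTheory ProbabilityTheory

/-- The modified Bessel function of the second kind of order one, via the
integral representation `K₁(x) = ∫₀^∞ exp (-x cosh t) cosh t dt` (valid for `x > 0`). -/
noncomputable def besselK1 (x : ℝ) : ℝ :=
  ∫ t in Set.Ioi (0 : ℝ), Real.exp (-x * Real.cosh t) * Real.cosh t

/-!
For `g1, g2 ≥ 0` the complementary event `γo ≤ SNR` is the event `β g1 + δ g2 + κ ≤ g1 g2`
with `β = γo σ2 / Ps`, `δ = γo σ2 (Ps + Pd) / Ps²`, `κ = γo σ2² / Ps²`. Given `g2 = y`, it is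
(up to a null set) empty when `y ≤ β`, and for `y > β` it is the exponential tail
`g1 ≥ (δ y + κ) / (y - β)`. Integrating that tail against the density of `g2` and putting
`y = β + u` leaves `e^{-(β/ε2 + δ/ε1)} ∫₀^∞ e^{-(u/ε2 + q/u)} du / ε2` with `q = (βδ + κ)/ε1`.
The substitution `u = √(q ε2) eᵗ` turns this integral into the `cosh` representation of `K₁`.
-/

open Set Real

lemma besselK1_nonneg (x : ℝ) : 0 ≤ besselK1 x :=
  setIntegral_nonneg measurableSet_Ioi fun t _ => by positivity

lemma mul_sqrt_div_eq_sqrt_mul {p : ℝ} (hp : 0 < p) (q : ℝ) : p * √(q / p) = √(p * q) := by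
  rw [show p * q = p ^ 2 * (q / p) by field_simp, sqrt_mul (sq_nonneg p), sqrt_sq hp.le]

lemma integral_exp_neg_mul_cosh_mul_cosh (z : ℝ) :
    ∫ t, exp (-(z * cosh t)) * cosh t = 2 * besselK1 z := by
  rw [besselK1, ← integral_comp_abs]
  simp only [cosh_abs, neg_mul]

lemma integral_exp_mul_exp_neg_mul_cosh {z : ℝ}
    (h : Integrable fun t => exp t * exp (-(z * cosh t))) :
    ∫ t, exp t * exp (-(z * cosh t)) = 2 * besselK1 z := by
  have hflip : ∫ t, exp (-t) * exp (-(z * cosh t)) = ∫ t, exp t * exp (-(z * cosh t)) := by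
    simpa only [cosh_neg] using integral_neg_eq_self (fun t => exp t * exp (-(z * cosh t))) volume
  have hflip_int : Integrable fun t => exp (-t) * exp (-(z * cosh t)) := by
    simpa only [cosh_neg] using h.comp_neg
  rw [← integral_exp_neg_mul_cosh_mul_cosh, ← add_halves (∫ t, exp t * _)]
  nth_rw 2 [← hflip]
  rw [← integral_div, ← integral_div, ← integral_add (h.div_const 2) (hflip_int.div_const 2)]
  congr 1 with t
  rw [cosh_eq]
  ring

section ExpSubstitution

variable {E : Type*} [NormedAddCommGroup E] [NormedSpace ℝ E]

lemma integral_Ioi_zero_eq_integral_exp_smul (g : ℝ → E) :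
    ∫ x in Ioi 0, g x = ∫ t, exp t • g (exp t) := by
  rw [← range_exp, ← image_univ, integral_image_eq_integral_abs_deriv_smul MeasurableSet.univ
    (fun t _ => (hasDerivAt_exp t).hasDerivWithinAt) exp_injective.injOn, setIntegral_univ]
  simp only [abs_of_pos (exp_pos _)]

lemma integrableOn_Ioi_zero_iff_integrable_exp_smul (g : ℝ → E) :
    IntegrableOn g (Ioi 0) ↔ Integrable fun t => exp t • g (exp t) := by
  rw [← range_exp, ← image_univ, integrableOn_image_iff_integrableOn_abs_deriv_smul
    MeasurableSet.univ (fun t _ => (hasDerivAt_exp t).hasDerivWithinAt) exp_injective.injOn,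
    integrableOn_univ]
  simp only [abs_of_pos (exp_pos _)]

end ExpSubstitution

lemma integrableOn_exp_neg_mul_add_div {p q : ℝ} (hp : 0 < p) (hq : 0 ≤ q) :
    IntegrableOn (fun u => exp (-(p * u + q / u))) (Ioi 0) := by
  refine (exp_neg_integrableOn_Ioi 0 hp).mono' (by fun_prop) ?_
  filter_upwards [ae_restrict_mem measurableSet_Ioi] with u (hu : 0 < u)
  rw [norm_of_nonneg (exp_pos _).le, exp_le_exp]
  have := div_nonneg hq hu.le
  linarith

theorem integral_exp_neg_mul_add_div {p q : ℝ} (hp : 0 < p) (hq : 0 < q) :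
    ∫ u in Ioi 0, exp (-(p * u + q / u)) = 2 * √(q / p) * besselK1 (2 * √(p * q)) := by
  set c := √(q / p)
  have hc : 0 < c := sqrt_pos.2 (div_pos hq hp)
  have hpc : p * c = √(p * q) := mul_sqrt_div_eq_sqrt_mul hp q
  have hqc : q / c = p * c := by
    rw [div_eq_iff hc.ne', mul_assoc, mul_self_sqrt (div_pos hq hp).le]
    field_simp
  -- `u = c eᵗ` turns `p u + q / u` into `p c (eᵗ + e⁻ᵗ) = 2 √(p q) cosh t`.
  have hsubst : ∀ t, exp (t + log c) • exp (-(p * exp (t + log c) + q / exp (t + log c)))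
      = c * (exp t * exp (-(2 * √(p * q) * cosh t))) := by
    intro t
    have hinv : q / (exp t * c) = p * c * exp (-t) := by
      rw [exp_neg, ← hqc]
      field_simp
    rw [exp_add, exp_log hc, cosh_eq, smul_eq_mul, ← hpc, hinv, mul_comm (exp t) c, mul_assoc]
    congr 3
    ring
  have hint := ((integrableOn_Ioi_zero_iff_integrable_exp_smul _).1
    (integrableOn_exp_neg_mul_add_div hp hq.le)).comp_add_right (log c)
  simp only [hsubst] at hint
  rw [integral_Ioi_zero_eq_integral_exp_smul, ← integral_add_right_eq_self _ (log c)]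
  simp only [hsubst, integral_const_mul]
  rw [integral_exp_mul_exp_neg_mul_cosh
    ((integrable_const_mul_iff (isUnit_iff_ne_zero.2 hc.ne') _).1 hint)]
  ring

lemma expMeasure_eq_withDensity (r : ℝ) :
    expMeasure r = volume.withDensity (exponentialPDF r) :=
  rfl

lemma expMeasure_Iio_zero (r : ℝ) : expMeasure r (Iio 0) = 0 := by
  rw [expMeasure_eq_withDensity, withDensity_apply _ measurableSet_Iio]
  exact lintegral_exponentialPDF_of_nonpos le_rfl

lemma ae_nonneg_expMeasure (r : ℝ) : ∀ᵐ x ∂expMeasure r, 0 ≤ x := by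
  rw [ae_iff]
  simp only [not_le]
  exact expMeasure_Iio_zero r

lemma expMeasure_Ici {r c : ℝ} (hr : 0 < r) (hc : 0 ≤ c) :
    expMeasure r (Ici c) = ENNReal.ofReal (exp (-(r * c))) := by
  have := isProbabilityMeasure_expMeasure hr
  have hexp : exp (-(r * c)) ≤ 1 := exp_le_one_iff.2 (by nlinarith)
  rw [← compl_Iio, prob_compl_eq_one_sub measurableSet_Iio, expMeasure_eq_withDensity,
    withDensity_apply _ measurableSet_Iio, setLIntegral_congr Iio_ae_eq_Iic,
    lintegral_exponentialPDF_eq_antiDeriv hr, if_pos hc, ENNReal.ofReal_sub _ (exp_pos _).le,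
    ENNReal.ofReal_one, ENNReal.sub_sub_cancel ENNReal.one_ne_top (ENNReal.ofReal_le_one.2 hexp)]

lemma setOf_add_add_le_mul_eq_Ici {β δ κ y : ℝ} (hy : β < y) :
    {x | β * x + δ * y + κ ≤ x * y} = Ici ((δ * y + κ) / (y - β)) := by
  ext x
  rw [mem_ofPred_eq, mem_Ici, div_le_iff₀ (sub_pos.2 hy)]
  constructor <;> intro h <;> linarith

lemma setOf_add_add_le_mul_subset_Iio {β δ κ y : ℝ} (hδ : 0 ≤ δ) (hκ : 0 < κ) (hy₀ : 0 ≤ y)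
    (hy : y ≤ β) : {x | β * x + δ * y + κ ≤ x * y} ⊆ Iio 0 := by
  intro x (hx : β * x + δ * y + κ ≤ x * y)
  rw [mem_Iio]
  by_contra! hx₀
  nlinarith [mul_le_mul_of_nonneg_left hy hx₀, mul_nonneg hδ hy₀]

lemma expMeasure_setOf_add_add_le_mul {r β δ κ y : ℝ} (hr : 0 < r) (hδ : 0 ≤ δ) (hκ : 0 < κ)
    (hy : 0 ≤ y) :
    expMeasure r {x | β * x + δ * y + κ ≤ x * y}
      = (Ioi β).indicator (fun y => ENNReal.ofReal (exp (-(r * ((δ * y + κ) / (y - β)))))) y := by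
  by_cases hβy : y ∈ Ioi β
  · rw [indicator_of_mem hβy, setOf_add_add_le_mul_eq_Ici hβy,
      expMeasure_Ici hr (div_nonneg (by positivity) (sub_pos.2 (mem_Ioi.1 hβy)).le)]
  · rw [indicator_of_notMem hβy]
    exact measure_mono_null (setOf_add_add_le_mul_subset_Iio hδ hκ hy (not_lt.1 hβy))
      (expMeasure_Iio_zero r)

lemma setLIntegral_Ioi_exponentialPDF_mul_exp_neg_mul_div_sub {r₁ r₂ β δ κ : ℝ} (hr₁ : 0 < r₁)
    (hr₂ : 0 < r₂) (hβ : 0 ≤ β) (hδ : 0 ≤ δ) (hκ : 0 < κ) :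
    ∫⁻ y in Ioi β, exponentialPDF r₂ y * ENNReal.ofReal (exp (-(r₁ * ((δ * y + κ) / (y - β)))))
      = ENNReal.ofReal (exp (-(r₂ * β + r₁ * δ)) * (2 * √(r₁ * r₂ * (β * δ + κ)))
          * besselK1 (2 * √(r₁ * r₂ * (β * δ + κ)))) := by
  set q := r₁ * (β * δ + κ) with hq_def
  have hq : 0 < q := by positivity
  have hshift : ∀ u ∈ Ioi (0 : ℝ),
      exponentialPDF r₂ (u + β)
          * ENNReal.ofReal (exp (-(r₁ * ((δ * (u + β) + κ) / (u + β - β)))))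
        = ENNReal.ofReal (exp (-(r₂ * β + r₁ * δ)) * r₂)
          * ENNReal.ofReal (exp (-(r₂ * u + q / u))) := by
    intro u (hu : 0 < u)
    rw [exponentialPDF_of_nonneg (by linarith), ← ENNReal.ofReal_mul (by positivity),
      ← ENNReal.ofReal_mul (by positivity), add_sub_cancel_right]
    have hexp : -(r₂ * (u + β)) + -(r₁ * ((δ * (u + β) + κ) / u))
        = -(r₂ * β + r₁ * δ) + -(r₂ * u + q / u) := by
      rw [hq_def]
      field_simp
      ring
    rw [mul_assoc, ← exp_add, hexp, exp_add]
    congr 1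
    ring
  rw [← (measurePreserving_add_right volume β).setLIntegral_comp_preimage_emb
      (measurableEmbedding_addRight β), preimage_add_const_Ioi, sub_self,
    setLIntegral_congr_fun measurableSet_Ioi hshift, lintegral_const_mul _ (by fun_prop),
    ← ofReal_integral_eq_lintegral_ofReal (integrableOn_exp_neg_mul_add_div hr₂ hq.le)
      (.of_forall fun _ => (exp_pos _).le), integral_exp_neg_mul_add_div hr₂ hq,
    ← ENNReal.ofReal_mul (by positivity),
    show r₁ * r₂ * (β * δ + κ) = r₂ * q by rw [hq_def]; ring, ← mul_sqrt_div_eq_sqrt_mul hr₂]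
  congr 1
  ring

theorem expMeasure_prod_setOf_add_add_le_mul {r₁ r₂ β δ κ : ℝ} (hr₁ : 0 < r₁) (hr₂ : 0 < r₂)
    (hβ : 0 ≤ β) (hδ : 0 ≤ δ) (hκ : 0 < κ) :
    (expMeasure r₁).prod (expMeasure r₂) {p | β * p.1 + δ * p.2 + κ ≤ p.1 * p.2}
      = ENNReal.ofReal (exp (-(r₂ * β + r₁ * δ)) * (2 * √(r₁ * r₂ * (β * δ + κ)))
          * besselK1 (2 * √(r₁ * r₂ * (β * δ + κ)))) := by
  have := isProbabilityMeasure_expMeasure hr₁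
  have := isProbabilityMeasure_expMeasure hr₂
  have hslices : ∀ᵐ y ∂expMeasure r₂,
      expMeasure r₁ ((fun x => (x, y)) ⁻¹' {p | β * p.1 + δ * p.2 + κ ≤ p.1 * p.2})
        = (Ioi β).indicator
            (fun y => ENNReal.ofReal (exp (-(r₁ * ((δ * y + κ) / (y - β)))))) y := by
    filter_upwards [ae_nonneg_expMeasure r₂] with y hy
    exact expMeasure_setOf_add_add_le_mul hr₁ hδ hκ hy
  rw [Measure.prod_apply_symm (measurableSet_le (by fun_prop) (by fun_prop)),
    lintegral_congr_ae hslices, lintegral_indicator measurableSet_Ioi, expMeasure_eq_withDensity,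
    setLIntegral_withDensity_eq_setLIntegral_mul _ (f := exponentialPDF r₂)
      (measurable_exponentialPDFReal r₂).ennreal_ofReal (by fun_prop) measurableSet_Ioi]
  exact setLIntegral_Ioi_exponentialPDF_mul_exp_neg_mul_div_sub hr₁ hr₂ hβ hδ hκ

lemma measureReal_setOf_lt_eq_one_sub {Ω : Type*} [MeasurableSpace Ω] {μ : Measure Ω}
    [IsProbabilityMeasure μ] {f : Ω → ℝ} (hf : Measurable f) (c : ℝ) :
    μ.real {ω | f ω < c} = 1 - μ.real {ω | c ≤ f ω} := by
  rw [← probReal_compl_eq_one_sub (measurableSet_le measurable_const hf)]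
  congr 1 with ω
  simp only [mem_ofPred_eq, mem_compl_iff, not_le]

lemma le_mul_mul_div_iff_add_add_le_mul {Ps Pd σ2 γo x y : ℝ} (hPs : 0 < Ps) (hPd : 0 ≤ Pd)
    (hσ : 0 < σ2) (hx : 0 ≤ x) (hy : 0 ≤ y) :
    γo ≤ Ps ^ 2 * x * y / (σ2 * (Ps * x + (Ps + Pd) * y + σ2))
      ↔ γo * σ2 / Ps * x + γo * σ2 * (Ps + Pd) / Ps ^ 2 * y + γo * σ2 ^ 2 / Ps ^ 2 ≤ x * y := by
  have hfactor : Ps ^ 2 * x * y - γo * (σ2 * (Ps * x + (Ps + Pd) * y + σ2))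
      = Ps ^ 2 * (x * y - (γo * σ2 / Ps * x + γo * σ2 * (Ps + Pd) / Ps ^ 2 * y
        + γo * σ2 ^ 2 / Ps ^ 2)) := by
    field_simp
  rw [le_div_iff₀ (by positivity), ← sub_nonneg, hfactor,
    mul_nonneg_iff_of_pos_left (by positivity), sub_nonneg]

theorem af_connection_outage_prob
    {Ω : Type*} [MeasurableSpace Ω] (μ : Measure Ω) [IsProbabilityMeasure μ]
    (g1 g2 : Ω → ℝ) (hg1 : Measurable g1) (hg2 : Measurable g2)
    (ε1 ε2 : ℝ) (hε1 : 0 < ε1) (hε2 : 0 < ε2)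
    (hlaw1 : Measure.map g1 μ = expMeasure (1 / ε1))
    (hlaw2 : Measure.map g2 μ = expMeasure (1 / ε2))
    (hindep : IndepFun g1 g2 μ)
    (Ps Pd σ2 γo : ℝ) (hPs : 0 < Ps) (hPd : 0 < Pd) (hσ : 0 < σ2) (hγo : 0 < γo) :
    (μ {ω | Ps^2 * g1 ω * g2 ω
        / (σ2 * (Ps * g1 ω + (Ps + Pd) * g2 ω + σ2)) < γo}).toReal
      = 1 - Real.exp (-(γo * σ2 / Ps) * ((Ps + Pd) / (Ps * ε1) + 1 / ε2))
          * (2 * γo * σ2 / Ps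
              * Real.sqrt (1 / (ε1 * ε2) * ((Ps + Pd) / Ps + 1 / γo)))
          * besselK1 (2 * γo * σ2 / Ps
              * Real.sqrt (1 / (ε1 * ε2) * ((Ps + Pd) / Ps + 1 / γo))) := by
  have hevent : {ω | γo ≤ Ps^2 * g1 ω * g2 ω / (σ2 * (Ps * g1 ω + (Ps + Pd) * g2 ω + σ2))}
      =ᵐ[μ] (fun ω => (g1 ω, g2 ω)) ⁻¹' {p | γo * σ2 / Ps * p.1
        + γo * σ2 * (Ps + Pd) / Ps ^ 2 * p.2 + γo * σ2 ^ 2 / Ps ^ 2 ≤ p.1 * p.2} := by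
    filter_upwards [ae_of_ae_map hg1.aemeasurable (hlaw1 ▸ ae_nonneg_expMeasure _),
      ae_of_ae_map hg2.aemeasurable (hlaw2 ▸ ae_nonneg_expMeasure _)] with ω h1 h2
    exact propext (le_mul_mul_div_iff_add_add_le_mul hPs hPd.le hσ h1 h2)
  have hlaw : μ.map (fun ω => (g1 ω, g2 ω))
      = (expMeasure (1 / ε1)).prod (expMeasure (1 / ε2)) := by
    rw [(indepFun_iff_map_prod_eq_prod_map_map hg1.aemeasurable hg2.aemeasurable).1 hindep,
      hlaw1, hlaw2]
  have hexponent : -(1 / ε2 * (γo * σ2 / Ps) + 1 / ε1 * (γo * σ2 * (Ps + Pd) / Ps ^ 2))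
      = -(γo * σ2 / Ps) * ((Ps + Pd) / (Ps * ε1) + 1 / ε2) := by
    field_simp
    ring
  have hargument : 2 * √(1 / ε1 * (1 / ε2)
        * (γo * σ2 / Ps * (γo * σ2 * (Ps + Pd) / Ps ^ 2) + γo * σ2 ^ 2 / Ps ^ 2))
      = 2 * γo * σ2 / Ps * √(1 / (ε1 * ε2) * ((Ps + Pd) / Ps + 1 / γo)) := by
    rw [show 1 / ε1 * (1 / ε2)
          * (γo * σ2 / Ps * (γo * σ2 * (Ps + Pd) / Ps ^ 2) + γo * σ2 ^ 2 / Ps ^ 2)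
        = (γo * σ2 / Ps) ^ 2 * (1 / (ε1 * ε2) * ((Ps + Pd) / Ps + 1 / γo)) by field_simp,
      sqrt_mul (sq_nonneg _), sqrt_sq (by positivity)]
    ring
  rw [← measureReal_def, measureReal_setOf_lt_eq_one_sub (by fun_prop), measureReal_def,
    measure_congr hevent, ← Measure.map_apply (hg1.prodMk hg2)
      (measurableSet_le (by fun_prop) (by fun_prop)), hlaw,
    expMeasure_prod_setOf_add_add_le_mul (by positivity) (by positivity) (by positivity)
      (by positivity) (by positivity),
    ENNReal.toReal_ofReal (mul_nonneg (by positivity) (besselK1_nonneg _)), hexponent, hargument]
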